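/- For (x, a, p, s) ∈ ℂ⁴ the following are equivalent: (1) (x, a, p, s) lies in the closure of 𝔽 in ℂ⁴; (2) there exists A = (a_{ij})_{i,j=1}² ∈ M₂(ℂ) with ‖A‖ ≤ 1 such that (a₁₁, a₂₂, det A, a₁₂ + a₂₁) = (x, a, p, s); (3) (s, ax−p) ∈ Γ, |p| ≤ 1, and 1 − |a|² − |x|² + |p|² − |s|²/2 − |s² − 4(ax−p)|/2 ≥ 0. -/

import Mathlib

/-- The operator norm of a 2×2 complex matrix, acting on the Euclidean space ℂ². -/
noncomputable def opNorm (A : Matrix (Fin 2) (Fin 2) ℂ) : ℝ :=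
  ‖LinearMap.toContinuousLinearMap (Matrix.toEuclideanLin A)‖

/-- The domain 𝔽 = {(a₁₁, a₂₂, det A, a₁₂ + a₂₁) : A ∈ M₂(ℂ), ‖A‖ < 1}. -/
noncomputable def domF : Set (ℂ × ℂ × ℂ × ℂ) :=
  {w | ∃ A : Matrix (Fin 2) (Fin 2) ℂ, opNorm A < 1 ∧
    w = (A 0 0, A 1 1, A.det, A 0 1 + A 1 0)}

/-- The closed symmetrized bidisc Γ. -/
def GammaSet : Set (ℂ × ℂ) :=
  {w | ∃ z1 z2 : ℂ, ‖z1‖ ≤ 1 ∧ ‖z2‖ ≤ 1 ∧ w = (z1 + z2, z1 * z2)}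

/-!
A 2×2 matrix `A` is a contraction iff `1 - Aᴴ A` is positive semidefinite, i.e. iff its two diagonal
entries and its determinant `1 - Σ |aᵢⱼ|² + |det A|²` are nonnegative. When `|det A| ≤ 1` the
diagonal conditions follow from the determinant one, since the diagonal entries sum to
`det (1 - Aᴴ A) + 1 - |det A|²`. The off-diagonal entries are the roots of `λ² - sλ + (ax - p)`,
so `|a₁₂|² + |a₂₁|² = (|s|² + |s² - 4(ax - p)|) / 2`, which turns the determinant condition into
the inequality of (3). Finally, the closure of 𝔽 is the image of the closed unit ball, because
`A ↦ (a₁₁, a₂₂, det A, a₁₂ + a₂₁)` is continuous and the closed ball is compact.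
-/

open scoped Matrix.Norms.L2Operator ComplexConjugate
open Matrix

lemma two_mul_mul_mul_le_of_sq_le {m₀ m₁ k : ℝ} (hm₀ : 0 ≤ m₀) (hm₁ : 0 ≤ m₁)
    (h : k ^ 2 ≤ m₀ * m₁) (t₀ t₁ : ℝ) : 2 * k * t₀ * t₁ ≤ m₀ * t₀ ^ 2 + m₁ * t₁ ^ 2 := by
  rcases hm₀.eq_or_lt with rfl | hm₀
  · obtain rfl : k = 0 := by nlinarith
    nlinarith
  · nlinarith [sq_nonneg (m₀ * t₀ - k * t₁), mul_nonneg (sub_nonneg.2 h) (sq_nonneg t₁)]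

lemma forall_two_mul_re_le_iff (m₀ m₁ : ℝ) (k : ℂ) :
    (∀ v₀ v₁ : ℂ, 2 * (k * conj v₀ * v₁).re ≤ m₀ * ‖v₀‖ ^ 2 + m₁ * ‖v₁‖ ^ 2) ↔
      0 ≤ m₀ ∧ 0 ≤ m₁ ∧ ‖k‖ ^ 2 ≤ m₀ * m₁ := by
  refine ⟨fun h ↦ ?_, fun ⟨hm₀, hm₁, hk⟩ v₀ v₁ ↦ ?_⟩
  · have hm₀ : 0 ≤ m₀ := by simpa using h 1 0
    have hm₁ : 0 ≤ m₁ := by simpa using h 0 1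
    have hquad : ∀ t : ℝ, 0 ≤ m₁ * (t * t) + (-(2 * ‖k‖ ^ 2)) * t + m₀ * ‖k‖ ^ 2 := by
      intro t
      have hkt := h k t
      rw [Complex.mul_conj, ← Complex.ofReal_mul, Complex.ofReal_re, Complex.norm_real,
        Real.norm_eq_abs, sq_abs, Complex.normSq_eq_norm_sq] at hkt
      linarith
    have hdisc := discrim_le_zero hquad
    rw [discrim] at hdisc
    exact ⟨hm₀, hm₁, by nlinarith [sq_nonneg ‖k‖, mul_nonneg hm₀ hm₁]⟩
  · calc 2 * (k * conj v₀ * v₁).re ≤ 2 * ‖k‖ * ‖v₀‖ * ‖v₁‖ := by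
          have := Complex.re_le_norm (k * conj v₀ * v₁)
          rw [norm_mul, norm_mul, Complex.norm_conj] at this
          linarith
      _ ≤ m₀ * ‖v₀‖ ^ 2 + m₁ * ‖v₁‖ ^ 2 := two_mul_mul_mul_le_of_sq_le hm₀ hm₁ hk _ _

lemma sq_norm_add_sq_norm_eq {z₁ z₂ s q : ℂ} (hs : z₁ + z₂ = s) (hq : z₁ * z₂ = q) :
    ‖z₁‖ ^ 2 + ‖z₂‖ ^ 2 = (‖s‖ ^ 2 + ‖s ^ 2 - 4 * q‖) / 2 := by
  have hdisc : s ^ 2 - 4 * q = (z₁ - z₂) ^ 2 := by rw [← hs, ← hq]; ring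
  rw [hdisc, ← hs, norm_pow]
  simp only [Complex.sq_norm, Complex.normSq_apply, Complex.add_re, Complex.add_im,
    Complex.sub_re, Complex.sub_im]
  ring

section Contraction

variable (A : Matrix (Fin 2) (Fin 2) ℂ)

lemma norm_le_one_iff_fin_two :
    ‖A‖ ≤ 1 ↔ ∀ v₀ v₁ : ℂ,
      ‖A 0 0 * v₀ + A 0 1 * v₁‖ ^ 2 + ‖A 1 0 * v₀ + A 1 1 * v₁‖ ^ 2 ≤ ‖v₀‖ ^ 2 + ‖v₁‖ ^ 2 := by
  simp only [l2_opNorm_def, ContinuousLinearMap.opNorm_le_iff zero_le_one, one_mul,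
    ← sq_le_sq₀ (norm_nonneg _) (norm_nonneg _), EuclideanSpace.norm_sq_eq, Fin.sum_univ_two,
    LinearEquiv.trans_apply, LinearMap.coe_toContinuousLinearMap', ofLp_toLpLin, toLin'_apply,
    mulVec, dotProduct]
  exact ⟨fun h v₀ v₁ ↦ h !₂[v₀, v₁], fun h v ↦ h (v 0) (v 1)⟩

lemma norm_sq_add_norm_sq_mulVec (v₀ v₁ : ℂ) :
    ‖A 0 0 * v₀ + A 0 1 * v₁‖ ^ 2 + ‖A 1 0 * v₀ + A 1 1 * v₁‖ ^ 2 =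
      (‖A 0 0‖ ^ 2 + ‖A 1 0‖ ^ 2) * ‖v₀‖ ^ 2 + (‖A 0 1‖ ^ 2 + ‖A 1 1‖ ^ 2) * ‖v₁‖ ^ 2 +
        2 * ((conj (A 0 0) * A 0 1 + conj (A 1 0) * A 1 1) * conj v₀ * v₁).re := by
  simp only [Complex.sq_norm, Complex.normSq_apply, Complex.mul_re, Complex.mul_im,
    Complex.add_re, Complex.add_im, Complex.conj_re, Complex.conj_im]
  ring

lemma norm_le_one_iff_gram :
    ‖A‖ ≤ 1 ↔ 0 ≤ 1 - ‖A 0 0‖ ^ 2 - ‖A 1 0‖ ^ 2 ∧ 0 ≤ 1 - ‖A 0 1‖ ^ 2 - ‖A 1 1‖ ^ 2 ∧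
      ‖conj (A 0 0) * A 0 1 + conj (A 1 0) * A 1 1‖ ^ 2 ≤
        (1 - ‖A 0 0‖ ^ 2 - ‖A 1 0‖ ^ 2) * (1 - ‖A 0 1‖ ^ 2 - ‖A 1 1‖ ^ 2) := by
  rw [norm_le_one_iff_fin_two, ← forall_two_mul_re_le_iff]
  refine forall₂_congr fun v₀ v₁ ↦ ?_
  rw [norm_sq_add_norm_sq_mulVec]
  constructor <;> intro h <;> linear_combination h

/-- The left-hand side is `det (1 - Aᴴ * A)`. -/
lemma gram_det_eq :
    (1 - ‖A 0 0‖ ^ 2 - ‖A 1 0‖ ^ 2) * (1 - ‖A 0 1‖ ^ 2 - ‖A 1 1‖ ^ 2) -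
        ‖conj (A 0 0) * A 0 1 + conj (A 1 0) * A 1 1‖ ^ 2 =
      1 - ‖A 0 0‖ ^ 2 - ‖A 1 1‖ ^ 2 - ‖A 0 1‖ ^ 2 - ‖A 1 0‖ ^ 2 + ‖A.det‖ ^ 2 := by
  simp only [det_fin_two, Complex.sq_norm, Complex.normSq_apply, Complex.mul_re, Complex.mul_im,
    Complex.add_re, Complex.add_im, Complex.sub_re, Complex.sub_im, Complex.conj_re,
    Complex.conj_im]
  ring

lemma norm_det_le_one_of_columns (h₀ : ‖A 0 0‖ ^ 2 + ‖A 1 0‖ ^ 2 ≤ 1)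
    (h₁ : ‖A 0 1‖ ^ 2 + ‖A 1 1‖ ^ 2 ≤ 1) : ‖A.det‖ ≤ 1 := by
  have htri : ‖A.det‖ ≤ ‖A 0 0‖ * ‖A 1 1‖ + ‖A 0 1‖ * ‖A 1 0‖ := by
    rw [det_fin_two, ← norm_mul, ← norm_mul]
    exact norm_sub_le _ _
  nlinarith [sq_nonneg (‖A 0 0‖ * ‖A 0 1‖ - ‖A 1 1‖ * ‖A 1 0‖),
    mul_nonneg (sub_nonneg.2 h₀) (sub_nonneg.2 h₁), norm_nonneg (A 0 0), norm_nonneg (A 1 1),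
    norm_nonneg (A 0 1), norm_nonneg (A 1 0), norm_nonneg A.det]

lemma norm_le_one_iff_det :
    ‖A‖ ≤ 1 ↔ ‖A.det‖ ≤ 1 ∧
      ‖A 0 1‖ ^ 2 + ‖A 1 0‖ ^ 2 ≤ 1 - ‖A 0 0‖ ^ 2 - ‖A 1 1‖ ^ 2 + ‖A.det‖ ^ 2 := by
  rw [norm_le_one_iff_gram]
  have hdet := gram_det_eq A
  have hK := sq_nonneg ‖conj (A 0 0) * A 0 1 + conj (A 1 0) * A 1 1‖
  constructor
  · rintro ⟨h₀, h₁, h⟩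
    exact ⟨norm_det_le_one_of_columns A (by linarith) (by linarith), by linarith⟩
  · rintro ⟨hp, h⟩
    have hp2 : ‖A.det‖ ^ 2 ≤ 1 := pow_le_one₀ (norm_nonneg _) hp
    have hprod : 0 ≤ (1 - ‖A 0 0‖ ^ 2 - ‖A 1 0‖ ^ 2) * (1 - ‖A 0 1‖ ^ 2 - ‖A 1 1‖ ^ 2) := by
      linarith
    have hsum : 0 ≤ (1 - ‖A 0 0‖ ^ 2 - ‖A 1 0‖ ^ 2) + (1 - ‖A 0 1‖ ^ 2 - ‖A 1 1‖ ^ 2) := by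
      linarith
    exact ⟨by nlinarith, by nlinarith, by linarith⟩

end Contraction

def fMap (A : Matrix (Fin 2) (Fin 2) ℂ) : ℂ × ℂ × ℂ × ℂ :=
  (A 0 0, A 1 1, A.det, A 0 1 + A 1 0)

lemma continuous_fMap : Continuous fMap := by
  unfold fMap
  fun_prop

lemma opNorm_eq_norm (A : Matrix (Fin 2) (Fin 2) ℂ) : opNorm A = ‖A‖ := rfl

lemma domF_eq_image_ball : domF = fMap '' Metric.ball 0 1 := by
  ext w
  simp only [domF, Set.mem_image, mem_ball_zero_iff, opNorm_eq_norm, fMap, eq_comm]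
  rfl

lemma closure_domF : closure domF = fMap '' Metric.closedBall 0 1 := by
  refine (closure_minimal ?_ ?_).antisymm ?_
  · rw [domF_eq_image_ball]
    exact Set.image_mono Metric.ball_subset_closedBall
  · exact ((isCompact_closedBall _ _).image continuous_fMap).isClosed
  · rw [← closure_ball (0 : Matrix (Fin 2) (Fin 2) ℂ) one_ne_zero, domF_eq_image_ball]
    exact image_closure_subset_closure_image continuous_fMap

lemma exists_norm_le_one_fMap_eq_iff (x a p s : ℂ) :
    (∃ A : Matrix (Fin 2) (Fin 2) ℂ, ‖A‖ ≤ 1 ∧ fMap A = (x, a, p, s)) ↔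
      (s, a * x - p) ∈ GammaSet ∧ ‖p‖ ≤ 1 ∧
        0 ≤ 1 - ‖a‖ ^ 2 - ‖x‖ ^ 2 + ‖p‖ ^ 2 - ‖s‖ ^ 2 / 2 - ‖s ^ 2 - 4 * (a * x - p)‖ / 2 := by
  constructor
  · rintro ⟨A, hA, hAw⟩
    simp only [fMap, Prod.mk.injEq] at hAw
    obtain ⟨rfl, rfl, rfl, hs⟩ := hAw
    have hq : A 0 1 * A 1 0 = A 1 1 * A 0 0 - A.det := by rw [det_fin_two]; ring
    obtain ⟨h₀, h₁, -⟩ := (norm_le_one_iff_gram A).1 hA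
    obtain ⟨hdet, hsum⟩ := (norm_le_one_iff_det A).1 hA
    rw [sq_norm_add_sq_norm_eq hs hq] at hsum
    refine ⟨⟨A 0 1, A 1 0, ?_, ?_, by rw [hs, hq]⟩, hdet, by linarith⟩
    · exact (sq_le_one_iff₀ (norm_nonneg _)).1 (by linarith [sq_nonneg ‖A 1 1‖])
    · exact (sq_le_one_iff₀ (norm_nonneg _)).1 (by linarith [sq_nonneg ‖A 0 0‖])
  · rintro ⟨⟨z₁, z₂, -, -, hw⟩, hp, h⟩
    simp only [Prod.mk.injEq] at hw
    obtain ⟨hs, hq⟩ := hw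
    have hdet : (!![x, z₁; z₂, a]).det = p := by
      rw [det_fin_two_of]
      linear_combination hq
    refine ⟨!![x, z₁; z₂, a], (norm_le_one_iff_det _).2 ?_, ?_⟩
    · simp only [hdet, of_apply, cons_val', cons_val_zero, cons_val_one, empty_val',
        cons_val_fin_one]
      rw [sq_norm_add_sq_norm_eq hs.symm hq.symm]
      exact ⟨hp, by linarith⟩
    · simp [fMap, hdet, hs]

/-- Proposition 2.4: (x, a, p, s) ∈ closure 𝔽 iff it equals (a₁₁, a₂₂, det A, a₁₂+a₂₁) for some
A with ‖A‖ ≤ 1, iff (s, ax−p) ∈ Γ, |p| ≤ 1 and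
1 − |a|² − |x|² + |p|² − |s|²/2 − |s² − 4(ax−p)|/2 ≥ 0. -/
theorem stmt3 (x a p s : ℂ) :
    ((x, a, p, s) ∈ closure domF ↔
      ∃ A : Matrix (Fin 2) (Fin 2) ℂ, opNorm A ≤ 1 ∧
        (A 0 0, A 1 1, A.det, A 0 1 + A 1 0) = (x, a, p, s)) ∧
    ((x, a, p, s) ∈ closure domF ↔
      (s, a * x - p) ∈ GammaSet ∧ ‖p‖ ≤ 1 ∧
      0 ≤ 1 - ‖a‖ ^ 2 - ‖x‖ ^ 2 + ‖p‖ ^ 2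
          - ‖s‖ ^ 2 / 2 - ‖s ^ 2 - 4 * (a * x - p)‖ / 2) := by
  have h₁₂ : (x, a, p, s) ∈ closure domF ↔
      ∃ A : Matrix (Fin 2) (Fin 2) ℂ, opNorm A ≤ 1 ∧
        (A 0 0, A 1 1, A.det, A 0 1 + A 1 0) = (x, a, p, s) := by
    simp only [closure_domF, Set.mem_image, mem_closedBall_zero_iff, opNorm_eq_norm]
    rfl
  exact ⟨h₁₂, h₁₂.trans (exists_norm_le_one_fMap_eq_iff x a p s)⟩
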